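/- Let T be a finite tree rooted at o, π a probability distribution on the vertices. There is a time-inhomogeneous Markov chain on T started at o reaching exactly the distribution π after depth(T) steps: at each vertex x, stay with probability π(x)/π(T_x) and otherwise move to a child c with probability π(T_c)/π(T_x) (staying forever once a stay occurs). Then the law of the chain at time depth(T) is exactly π. -/

import Mathlib

open Finset
open scoped Classical

/-- The subtree rooted at `x` in a rooted tree given by a parent map `prt`. -/
noncomputable def subtree {V : Type*} [Fintype V] (prt : V → V) (x : V) : Finset V :=
  univ.filter (fun z => ∃ n, prt^[n] z = x)

/-- The depth of the tree rooted at `o`: the maximal distance from `o` to any vertex. -/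
noncomputable def treeDepth {V : Type*} [Fintype V] (prt : V → V) (o : V) : ℕ :=
  sSup {n : ℕ | ∃ z, prt^[n] z = o ∧ ∀ m < n, prt^[m] z ≠ o}

/-- The (time-homogeneous lift of the) chain of the paper, on states `V × Bool` where
`(x, false)` is "active at `x`" and `(x, true)` is "stopped at `x`":
from `(x, false)` stay (stop) with probability `π(x)/π(T_x)`, and move to a child `c` with
probability `π(T_c)/π(T_x)`; stopped states are absorbing. -/
noncomputable def stopKernel {V : Type*} [Fintype V] (prt : V → V) (π : V → ℝ) :
    V × Bool → V × Bool → ℝ :=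
  fun s t =>
    match s, t with
    | (x, false), (y, true) =>
        if y = x then π x / (∑ z ∈ subtree prt x, π z) else 0
    | (x, false), (c, false) =>
        if prt c = x ∧ c ≠ x then
          (∑ z ∈ subtree prt c, π z) / (∑ z ∈ subtree prt x, π z)
        else 0
    | (x, true), (y, b) => if y = x ∧ b = true then 1 else 0

/-- Evolution of a distribution under a Markov kernel. -/
noncomputable def evolveK {S : Type*} [Fintype S] (K : S → S → ℝ) (μ : S → ℝ) : ℕ → S → ℝ
  | 0 => μ
  | (t + 1) => fun y => ∑ x, evolveK K μ t x * K x y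

/-!
Let `d(y)` be the distance from `y` to the root. By induction on `t`, at time `t` the chain is
active at `y` with probability `π(T_y)` if `d(y) = t` and `0` otherwise: the mass `π(T_x)`
active at `x` sends exactly `π(T_c)` to each child `c`, and keeps `π(x)` as stopped mass. Hence
the stopped mass at `y` is `π(y)` once `t > d(y)`. At `t = depth(T)` every `y` with
`d(y) < t` contributes `π(y)` as stopped mass, and every `y` with `d(y) = t` is a leaf, so its
active mass is `π(T_y) = π(y)`.
-/

section RootDist

variable {V : Type*} {prt : V → V} {o : V}

noncomputable def rootDist (hreach : ∀ z, ∃ n, prt^[n] z = o) (z : V) : ℕ :=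
  Nat.find (hreach z)

variable (hreach : ∀ z, ∃ n, prt^[n] z = o)
include hreach

theorem rootDist_eq_iff {z : V} {n : ℕ} :
    rootDist hreach z = n ↔ prt^[n] z = o ∧ ∀ m < n, prt^[m] z ≠ o :=
  Nat.find_eq_iff _

theorem iterate_rootDist (z : V) : prt^[rootDist hreach z] z = o :=
  Nat.find_spec (hreach z)

theorem rootDist_le_of_iterate_eq {z : V} {n : ℕ} (h : prt^[n] z = o) :
    rootDist hreach z ≤ n :=
  Nat.find_min' _ h

theorem rootDist_eq_zero_iff {z : V} : rootDist hreach z = 0 ↔ z = o := by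
  simp [rootDist_eq_iff]

theorem eq_root_of_apply_eq_self {z : V} (h : prt z = z) : z = o := by
  simpa only [Function.iterate_fixed h] using iterate_rootDist hreach z

theorem rootDist_eq_rootDist_apply_add_one {z : V} (hz : z ≠ o) :
    rootDist hreach z = rootDist hreach (prt z) + 1 := by
  have hpos : rootDist hreach z ≠ 0 := (rootDist_eq_zero_iff hreach).not.mpr hz
  have hle : rootDist hreach z ≤ rootDist hreach (prt z) + 1 :=
    rootDist_le_of_iterate_eq hreach <| by
      rw [Function.iterate_succ_apply]; exact iterate_rootDist hreach _
  have hge : rootDist hreach (prt z) ≤ rootDist hreach z - 1 :=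
    rootDist_le_of_iterate_eq hreach <| by
      rw [← Function.iterate_succ_apply, Nat.succ_eq_add_one, Nat.sub_one_add_one hpos]
      exact iterate_rootDist hreach z
  omega

theorem rootDist_eq_rootDist_iterate_add (hroot : prt o = o) {z : V} {n : ℕ}
    (h : prt^[n] z ≠ o) : rootDist hreach z = rootDist hreach (prt^[n] z) + n := by
  induction n with
  | zero => rfl
  | succ n ih =>
    rw [Function.iterate_succ_apply'] at h ⊢
    have hn : prt^[n] z ≠ o := fun e => h (by rw [e, hroot])
    rw [ih hn, rootDist_eq_rootDist_apply_add_one hreach hn, add_right_comm, add_assoc]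

theorem rootDist_lt_of_iterate_eq (hroot : prt o = o) {y z : V} {n : ℕ}
    (h : prt^[n] z = y) (hzy : z ≠ y) : rootDist hreach y < rootDist hreach z := by
  by_cases hy : y = o
  · subst hy
    rw [(rootDist_eq_zero_iff hreach).mpr rfl, Nat.pos_iff_ne_zero]
    exact (rootDist_eq_zero_iff hreach).not.mpr hzy
  · have hn : n ≠ 0 := by rintro rfl; exact hzy h
    rw [rootDist_eq_rootDist_iterate_add hreach hroot (z := z) (n := n) (by rwa [h]), h]
    omega

theorem rootDist_le_treeDepth [Fintype V] (z : V) : rootDist hreach z ≤ treeDepth prt o := by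
  have hrange : {n : ℕ | ∃ z, prt^[n] z = o ∧ ∀ m < n, prt^[m] z ≠ o} =
      Set.range (rootDist hreach) := by
    ext n
    simp only [Set.mem_ofPred_eq, Set.mem_range, rootDist_eq_iff]
  unfold treeDepth
  rw [hrange]
  exact le_csSup (Set.finite_range _).bddAbove ⟨z, rfl⟩

end RootDist

section Subtree

variable {V : Type*} [Fintype V] {prt : V → V}

theorem mem_subtree {x z : V} : z ∈ subtree prt x ↔ ∃ n, prt^[n] z = x := by
  simp [subtree]

theorem self_mem_subtree (x : V) : x ∈ subtree prt x :=
  mem_subtree.mpr ⟨0, rfl⟩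

theorem subtree_eq_univ {o : V} (hreach : ∀ z, ∃ n, prt^[n] z = o) : subtree prt o = univ :=
  eq_univ_of_forall fun z => mem_subtree.mpr (hreach z)

theorem subtree_eq_singleton_of_rootDist_eq_treeDepth {o : V} (hroot : prt o = o)
    (hreach : ∀ z, ∃ n, prt^[n] z = o) {y : V} (hy : rootDist hreach y = treeDepth prt o) :
    subtree prt y = {y} := by
  refine eq_singleton_iff_unique_mem.mpr ⟨self_mem_subtree y, fun z hz => ?_⟩
  obtain ⟨n, hn⟩ := mem_subtree.mp hz
  by_contra hzy
  have := rootDist_lt_of_iterate_eq hreach hroot hn hzy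
  have := rootDist_le_treeDepth hreach z
  omega

noncomputable def subtreeMass (prt : V → V) (π : V → ℝ) (x : V) : ℝ :=
  ∑ z ∈ subtree prt x, π z

theorem subtreeMass_pos {π : V → ℝ} (hpos : ∀ x, 0 < π x) (x : V) : 0 < subtreeMass prt π x :=
  sum_pos (fun z _ => hpos z) ⟨x, self_mem_subtree x⟩

end Subtree

section StopKernel

variable {V : Type*} [Fintype V] {prt : V → V} {π : V → ℝ}

theorem evolveK_stopKernel_succ_active (μ : V × Bool → ℝ) (t : ℕ) (y : V) :
    evolveK (stopKernel prt π) μ (t + 1) (y, false) =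
      if prt y = y then 0
      else evolveK (stopKernel prt π) μ t (prt y, false) *
        (subtreeMass prt π y / subtreeMass prt π (prt y)) := by
  simp only [evolveK, Fintype.sum_prod_type, Fintype.sum_bool, stopKernel, subtreeMass,
    Bool.false_eq_true, if_false, mul_zero, ite_self, zero_add, ite_and, mul_ite,
    sum_ite_eq, mem_univ, if_true, ite_not]
  rw [eq_comm (a := y)]

theorem evolveK_stopKernel_succ_stopped (μ : V × Bool → ℝ) (t : ℕ) (y : V) :
    evolveK (stopKernel prt π) μ (t + 1) (y, true) =
      evolveK (stopKernel prt π) μ t (y, false) * (π y / subtreeMass prt π y) +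
        evolveK (stopKernel prt π) μ t (y, true) := by
  simp only [evolveK, Fintype.sum_prod_type, Fintype.sum_bool, stopKernel, subtreeMass,
    and_true, mul_ite, mul_one, mul_zero, sum_add_distrib, sum_ite_eq, mem_univ, if_true]
  exact add_comm _ _

variable {o : V} (hroot : prt o = o) (hreach : ∀ z, ∃ n, prt^[n] z = o)
  (hS : ∀ x, subtreeMass prt π x ≠ 0) (hsum : ∑ x, π x = 1)
include hroot hreach hS hsum

theorem evolveK_stopKernel_active (t : ℕ) (y : V) :
    evolveK (stopKernel prt π) (fun s => if s = (o, false) then 1 else 0) t (y, false) =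
      if rootDist hreach y = t then subtreeMass prt π y else 0 := by
  induction t generalizing y with
  | zero =>
    by_cases hy : y = o
    · subst hy
      simp [evolveK, (rootDist_eq_zero_iff hreach).mpr, subtreeMass, subtree_eq_univ hreach, hsum]
    · simp [evolveK, hy, (rootDist_eq_zero_iff hreach).not.mpr hy]
  | succ t ih =>
    rw [evolveK_stopKernel_succ_active, ih]
    by_cases hy : y = o
    · subst hy
      simp [hroot, (rootDist_eq_zero_iff hreach).mpr]
    · have hfix : prt y ≠ y := mt (eq_root_of_apply_eq_self hreach) hy
      rw [if_neg hfix, rootDist_eq_rootDist_apply_add_one hreach hy]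
      by_cases ht : rootDist hreach (prt y) = t
      · rw [if_pos ht, if_pos (by rw [ht]), mul_div_cancel₀ _ (hS _)]
      · rw [if_neg ht, if_neg (by omega), zero_mul]

theorem evolveK_stopKernel_stopped (t : ℕ) (y : V) :
    evolveK (stopKernel prt π) (fun s => if s = (o, false) then 1 else 0) t (y, true) =
      if rootDist hreach y < t then π y else 0 := by
  induction t with
  | zero => simp [evolveK]
  | succ t ih =>
    rw [evolveK_stopKernel_succ_stopped, ih, evolveK_stopKernel_active hroot hreach hS hsum]
    rcases lt_trichotomy (rootDist hreach y) t with h | h | h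
    · rw [if_neg h.ne, if_pos h, if_pos (by omega), zero_mul, zero_add]
    · rw [if_pos h, if_neg h.not_lt, if_pos (by omega), add_zero, mul_div_cancel₀ _ (hS y)]
    · rw [if_neg h.ne', if_neg (by omega), if_neg (by omega), zero_mul, zero_add]

end StopKernel

/-- Started at the root `o`, the chain which at each vertex `x` stops with probability
`π(x)/π(T_x)` and otherwise moves to a child `c` with probability `π(T_c)/π(T_x)`
(stopped states absorbing) has law exactly `π` at time `depth(T)`. -/
theorem tree_chain_exact_mixing {V : Type*} [Fintype V] (prt : V → V) (o : V)
    (hroot : prt o = o) (hreach : ∀ z, ∃ n, prt^[n] z = o)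
    (π : V → ℝ) (hpos : ∀ x, 0 < π x) (hsum : ∑ x, π x = 1) :
    ∀ y, evolveK (stopKernel prt π)
          (fun s => if s = (o, false) then 1 else 0) (treeDepth prt o) (y, false)
        + evolveK (stopKernel prt π)
          (fun s => if s = (o, false) then 1 else 0) (treeDepth prt o) (y, true)
      = π y := by
  have hS : ∀ x, subtreeMass prt π x ≠ 0 := fun x => (subtreeMass_pos hpos x).ne'
  intro y
  rw [evolveK_stopKernel_active hroot hreach hS hsum,
    evolveK_stopKernel_stopped hroot hreach hS hsum]
  rcases (rootDist_le_treeDepth hreach y).eq_or_lt with hleaf | hinner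
  · rw [if_pos hleaf, if_neg hleaf.not_lt, add_zero, subtreeMass,
      subtree_eq_singleton_of_rootDist_eq_treeDepth hroot hreach hleaf, sum_singleton]
  · rw [if_neg hinner.ne, if_pos hinner, zero_add]
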